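/- arXiv:1401.3321 — 2 statements merged into one kernel-verified Lean document; each statement's English description precedes it below -/
import Mathlib

section
/- Degenerate q-Gauss sum: for |q|<1, any n ∈ ℕ, and parameters b, c with (c;q)_n ≠ 0 and (q;q)_j (c;q)_j ≠ 0 for j ≤ n, ∑_{j=0}^{n} [(q^{-n};q)_j (b;q)_j / ((q;q)_j (c;q)_j)] q^j = b^n (c/b;q)_n / (c;q)_n. -/
/-!
Induction on `n`, replacing `c` by `c q`. Writing `(q^{-(n+1)};q)_{j+1}` through `(q^{-n};q)_{j+1}`
and `(q^{-n};q)_j` makes the sum for `n + 1` telescope to a sum over `j ≤ n` whose last term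
carries the factor `(q^{-n};q)_{n+1} = 0`; the resulting sum is `(b - c)/(1 - c)` times the sum
for `n` with parameter `c q`. This yields the `c`-free form `∏_{i<n} (b - c q^i) / (c;q)_n` of the
right-hand side, which equals `b^n (c/b;q)_n / (c;q)_n` as `b ≠ 0`.
-/

noncomputable def qp (a q : ℂ) (n : ℕ) : ℂ := ∏ i ∈ Finset.range n, (1 - a * q ^ i)

open Finset

lemma qp_zero (a q : ℂ) : qp a q 0 = 1 := prod_range_zero _

lemma qp_succ (a q : ℂ) (n : ℕ) : qp a q (n + 1) = qp a q n * (1 - a * q ^ n) :=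
  prod_range_succ _ _

lemma qp_succ' (a q : ℂ) (n : ℕ) : qp a q (n + 1) = (1 - a) * qp (a * q) q n := by
  simp only [qp, prod_range_succ', pow_succ', pow_zero, mul_one, mul_assoc, mul_comm]

lemma qp_ne_zero_of_le {a q : ℂ} {m n : ℕ} (h : qp a q n ≠ 0) (hmn : m ≤ n) : qp a q m ≠ 0 :=
  left_ne_zero_of_mul (by rwa [qp, prod_range_mul_prod_Ico _ hmn])

lemma qp_eq_zero_of_mul_pow_eq_one {a q : ℂ} {i n : ℕ} (hi : i < n) (h : a * q ^ i = 1) :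
    qp a q n = 0 :=
  prod_eq_zero (mem_range.2 hi) (sub_eq_zero.2 h.symm)

lemma pow_mul_qp_succ (a q : ℂ) (j : ℕ) :
    q ^ (j + 1) * qp a q (j + 1) = qp (a * q) q (j + 1) - (1 - q ^ (j + 1)) * qp (a * q) q j := by
  rw [qp_succ', qp_succ]
  ring

lemma pow_mul_qp_div {b : ℂ} (hb : b ≠ 0) (c q : ℂ) (n : ℕ) :
    b ^ n * qp (c / b) q n = ∏ i ∈ range n, (b - c * q ^ i) := by
  rw [qp, ← card_range n, ← prod_const, card_range, ← prod_mul_distrib]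
  refine prod_congr rfl fun i _ => ?_
  field_simp

/-- The `j`-th term of `₂φ₁(a, b; c; q, q)`. -/
noncomputable def phi21Term (a b c q : ℂ) (j : ℕ) : ℂ :=
  qp a q j * qp b q j / (qp q q j * qp c q j) * q ^ j

lemma phi21Term_zero (a b c q : ℂ) : phi21Term a b c q 0 = 1 := by
  simp [phi21Term, qp_zero]

lemma phi21Term_succ {q c : ℂ} {j : ℕ} (hqq : qp q q (j + 1) ≠ 0) (a b : ℂ) :
    phi21Term a b c q (j + 1)
      = qp (a * q) q (j + 1) * qp b q (j + 1) / (qp q q (j + 1) * qp c q (j + 1))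
        - qp (a * q) q j * qp b q (j + 1) / (qp q q j * qp c q (j + 1)) := by
  have hsplit : qp q q (j + 1) = qp q q j * (1 - q ^ (j + 1)) := by rw [qp_succ, pow_succ']
  rw [phi21Term, hsplit, div_mul_eq_mul_div, mul_right_comm, mul_comm _ (q ^ _),
    pow_mul_qp_succ]
  rw [hsplit] at hqq
  field_simp [right_ne_zero_of_mul hqq]

lemma phi21Term_sub {c q : ℂ} {j : ℕ} (hc : qp c q (j + 1) ≠ 0) (a b : ℂ) :
    qp a q j * qp b q j / (qp q q j * qp c q j)
      - qp a q j * qp b q (j + 1) / (qp q q j * qp c q (j + 1))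
      = (b - c) / (1 - c) * phi21Term a b (c * q) q j := by
  have key : 1 / qp c q j - (1 - b * q ^ j) / qp c q (j + 1)
      = (b - c) / (1 - c) * (q ^ j / qp (c * q) q j) := calc
    _ = (b - c) * q ^ j / qp c q (j + 1) := by
      rw [qp_succ] at hc ⊢
      generalize hB : 1 - c * q ^ j = B at hc ⊢
      field_simp [left_ne_zero_of_mul hc, right_ne_zero_of_mul hc]
      linear_combination -hB
    _ = _ := by rw [qp_succ', mul_div_mul_comm]
  rw [phi21Term, qp_succ b]
  linear_combination qp a q j * qp b q j / qp q q j * key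

lemma sum_phi21Term_succ {q : ℂ} (hq : q ≠ 0) {n : ℕ} (b : ℂ) {c : ℂ}
    (hqq : qp q q (n + 1) ≠ 0) (hc : qp c q (n + 1) ≠ 0) :
    ∑ j ∈ range (n + 2), phi21Term (q ^ (n + 1))⁻¹ b c q j
      = (b - c) / (1 - c) * ∑ j ∈ range (n + 1), phi21Term (q ^ n)⁻¹ b (c * q) q j := by
  have ha : (q ^ (n + 1))⁻¹ * q = (q ^ n)⁻¹ := by
    rw [pow_succ, mul_inv, inv_mul_cancel_right₀ hq]
  set f : ℕ → ℂ := fun j => qp (q ^ n)⁻¹ q j * qp b q j / (qp q q j * qp c q j)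
  set g : ℕ → ℂ := fun j => qp (q ^ n)⁻¹ q j * qp b q (j + 1) / (qp q q j * qp c q (j + 1))
  have hf : f (n + 1) = 0 := by
    have hvanish := qp_eq_zero_of_mul_pow_eq_one n.lt_succ_self (inv_mul_cancel₀ (pow_ne_zero n hq))
    simp only [f, hvanish, zero_mul, zero_div]
  calc ∑ j ∈ range (n + 2), phi21Term (q ^ (n + 1))⁻¹ b c q j
      = f 0 + ∑ j ∈ range (n + 1), (f (j + 1) - g j) := by
        rw [sum_range_succ', add_comm, phi21Term_zero]
        congr 1
        · simp [f, qp_zero]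
        · refine sum_congr rfl fun j hj => ?_
          rw [phi21Term_succ (qp_ne_zero_of_le hqq (by simpa using hj)), ha]
    _ = ∑ j ∈ range (n + 1), (f j - g j) := by
        rw [sum_sub_distrib, sum_sub_distrib, ← add_sub_assoc, add_comm, ← sum_range_succ',
          sum_range_succ, hf, add_zero]
    _ = _ := by
        rw [mul_sum]
        exact sum_congr rfl fun j hj => phi21Term_sub (qp_ne_zero_of_le hc (by simpa using hj)) _ _

theorem sum_phi21Term {q : ℂ} (hq : q ≠ 0) (b : ℂ) (n : ℕ) {c : ℂ}
    (hqq : qp q q n ≠ 0) (hc : qp c q n ≠ 0) :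
    ∑ j ∈ range (n + 1), phi21Term (q ^ n)⁻¹ b c q j
      = (∏ i ∈ range n, (b - c * q ^ i)) / qp c q n := by
  induction n generalizing c with
  | zero => simp [phi21Term_zero, qp_zero]
  | succ n ih =>
    have hc' := hc
    rw [qp_succ'] at hc'
    rw [sum_phi21Term_succ hq b hqq hc,
      ih (qp_ne_zero_of_le hqq n.le_succ) (right_ne_zero_of_mul hc'), prod_range_succ', qp_succ']
    simp only [pow_succ, mul_assoc, pow_zero, mul_one]
    field_simp [left_ne_zero_of_mul hc', right_ne_zero_of_mul hc']

theorem stmt4_general (q b c : ℂ) (hq0 : q ≠ 0) (hb : b ≠ 0) (n : ℕ)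
    (hden : ∀ j : ℕ, j ≤ n → qp q q j * qp c q j ≠ 0) :
    ∑ j ∈ Finset.range (n + 1),
        qp (q ^ (-(n : ℤ))) q j * qp b q j / (qp q q j * qp c q j) * q ^ j
      = b ^ n * qp (c / b) q n / qp c q n := by
  have hqc := hden n le_rfl
  rw [zpow_neg, zpow_natCast, pow_mul_qp_div hb]
  exact sum_phi21Term hq0 b n (left_ne_zero_of_mul hqc) (right_ne_zero_of_mul hqc)

theorem stmt4 (q b c : ℂ) (hq : ‖q‖ < 1) (hq0 : q ≠ 0) (hb : b ≠ 0) (n : ℕ)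
    (hc : qp c q n ≠ 0)
    (hden : ∀ j : ℕ, j ≤ n → qp q q j * qp c q j ≠ 0) :
    ∑ j ∈ Finset.range (n + 1),
        qp (q ^ (-(n : ℤ))) q j * qp b q j / (qp q q j * qp c q j) * q ^ j
      = b ^ n * qp (c / b) q n / qp c q n :=
  stmt4_general q b c hq0 hb n hden
end

section
/- Symmetry of the two-sided generating function of the (q,μ,ν)-deformed binomial distribution: for |q|<1, 0 < μ < 1, 0 ≤ ν ≤ μ, and all m, y ∈ ℕ, ∑_{j=0}^{m} φ_{q,μ,ν}(j|m) q^{j y} = ∑_{s=0}^{y} φ_{q,μ,ν}(s|y) q^{s m}. -/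
noncomputable def qpR (a q : ℝ) (n : ℕ) : ℝ := ∏ i ∈ Finset.range n, (1 - a * q ^ i)

noncomputable def phi (q μ ν : ℝ) (j m : ℕ) : ℝ :=
  μ ^ j * qpR (ν / μ) q j * qpR μ q (m - j) * qpR q q m
    / (qpR ν q m * qpR q q j * qpR q q (m - j))

/-!
Expanding `z ^ y` by q-Newton interpolation in the basis `∏_{i<s} (z - q^i)` and evaluating at
`z = q^j` gives `q^(j y) = ∑_s [y,s]_q [j,s]_q D_s` with `D_s = ∏_{i<s} (q^s - q^i)`. By the
q-Vandermonde identity the q-factorial moments of `φ(·|m)` are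
`∑_j φ(j|m) [j,s]_q = μ^s (ν/μ;q)_s / (ν;q)_s · [m,s]_q`. Hence
`S_{m,y} = ∑_s c_s [m,s]_q [y,s]_q` with `c_s` independent of `m` and `y`, which is symmetric.
-/

open Finset

def qBinom {R : Type*} [CommRing R] (q : R) : ℕ → ℕ → R
  | _, 0 => 1
  | 0, _ + 1 => 0
  | n + 1, k + 1 => q ^ (k + 1) * qBinom q n (k + 1) + qBinom q n k

section QBinom

variable {R : Type*} [CommRing R] (q : R)

@[simp]
theorem qBinom_zero_right (n : ℕ) : qBinom q n 0 = 1 := by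
  cases n <;> rfl

@[simp]
theorem qBinom_zero_succ (k : ℕ) : qBinom q 0 (k + 1) = 0 :=
  rfl

theorem qBinom_succ_succ (n k : ℕ) :
    qBinom q (n + 1) (k + 1) = q ^ (k + 1) * qBinom q n (k + 1) + qBinom q n k :=
  rfl

theorem qBinom_eq_zero_of_lt {n k : ℕ} (h : n < k) : qBinom q n k = 0 := by
  obtain ⟨k, rfl⟩ := Nat.exists_eq_add_one_of_ne_zero (Nat.ne_zero_of_lt h)
  induction n generalizing k with
  | zero => exact qBinom_zero_succ q k
  | succ n ih =>
    rw [qBinom_succ_succ, ih k (by omega), mul_zero, zero_add]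
    cases k with
    | zero => omega
    | succ k => exact ih k (by omega)

@[simp]
theorem qBinom_self (n : ℕ) : qBinom q n n = 1 := by
  induction n with
  | zero => rfl
  | succ n ih =>
    rw [qBinom_succ_succ, ih, qBinom_eq_zero_of_lt q n.lt_succ_self, mul_zero, zero_add]

theorem sum_range_qBinom_succ_mul (n : ℕ) (g : ℕ → R) :
    ∑ k ∈ range (n + 2), qBinom q (n + 1) k * g k
      = ∑ k ∈ range (n + 1), qBinom q n k * (q ^ k * g k + g (k + 1)) := by
  have top : ∑ k ∈ range (n + 2), qBinom q n k * (q ^ k * g k)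
      = ∑ k ∈ range (n + 1), qBinom q n k * (q ^ k * g k) := by
    rw [sum_range_succ, qBinom_eq_zero_of_lt q n.lt_succ_self, zero_mul, add_zero]
  simp only [mul_add, sum_add_distrib, ← top]
  rw [sum_range_succ' _ (n + 1), sum_range_succ' _ (n + 1)]
  simp only [qBinom_succ_succ, add_mul, sum_add_distrib, qBinom_zero_right, pow_zero, one_mul,
    mul_assoc, mul_left_comm (qBinom q n _)]
  ring

theorem pow_eq_sum_qBinom_mul_prod (z : R) (y : ℕ) :
    z ^ y = ∑ s ∈ range (y + 1), qBinom q y s * ∏ i ∈ range s, (z - q ^ i) := by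
  induction y with
  | zero => simp
  | succ y ih =>
    rw [sum_range_qBinom_succ_mul, pow_succ, ih, sum_mul]
    refine sum_congr rfl fun s _ => ?_
    rw [prod_range_succ]
    ring

theorem prod_pow_succ_sub_pow (j s : ℕ) :
    ∏ i ∈ range (s + 1), (q ^ (j + 1) - q ^ i)
      = (q ^ (j + 1) - 1) * q ^ s * ∏ i ∈ range s, (q ^ j - q ^ i) := by
  have factor : ∀ i, q ^ (j + 1) - q ^ (i + 1) = q * (q ^ j - q ^ i) := fun i => by ring
  rw [prod_range_succ', pow_zero]
  simp only [factor, prod_mul_distrib, prod_const, card_range]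
  ring

theorem prod_pow_sub_pow_eq_qBinom_mul (j s : ℕ) :
    ∏ i ∈ range s, (q ^ j - q ^ i) = qBinom q j s * ∏ i ∈ range s, (q ^ s - q ^ i) := by
  induction j generalizing s with
  | zero =>
    cases s with
    | zero => simp
    | succ s => simp [prod_range_succ']
  | succ j ih =>
    cases s with
    | zero => simp
    | succ s =>
      have h₀ := ih s
      have h₁ := ih (s + 1)
      rw [prod_pow_succ_sub_pow q s s, prod_range_succ] at h₁
      rw [prod_pow_succ_sub_pow, prod_pow_succ_sub_pow q s s, qBinom_succ_succ]
      linear_combination (q ^ (s + 1) - 1) * q ^ s * h₀ + q ^ (s + 1) * h₁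

end QBinom

theorem qpR_succ (a q : ℝ) (n : ℕ) : qpR a q (n + 1) = qpR a q n * (1 - a * q ^ n) :=
  prod_range_succ _ _

theorem qpR_succ' (a q : ℝ) (n : ℕ) : qpR a q (n + 1) = (1 - a) * qpR (a * q) q n := by
  simp only [qpR, prod_range_succ', pow_succ', pow_zero, mul_one, mul_assoc]
  ring

theorem qpR_add (a q : ℝ) (s k : ℕ) : qpR a q (s + k) = qpR a q s * qpR (a * q ^ s) q k := by
  simp only [qpR, prod_range_add, pow_add, mul_assoc]

theorem qpR_ne_zero {a q : ℝ} (ha : |a| < 1) (hq : |q| ≤ 1) (n : ℕ) : qpR a q n ≠ 0 := by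
  refine prod_ne_zero_iff.2 fun i _ => (sub_pos.2 ?_).ne'
  calc a * q ^ i ≤ |a * q ^ i| := le_abs_self _
    _ = |a| * |q| ^ i := by rw [abs_mul, abs_pow]
    _ ≤ |a| := mul_le_of_le_one_right (abs_nonneg a) (pow_le_one₀ (abs_nonneg q) hq)
    _ < 1 := ha

theorem qBinom_add_mul_qpR (q : ℝ) (k l : ℕ) :
    qBinom q (k + l) k * qpR q q k * qpR q q l = qpR q q (k + l) := by
  induction l generalizing k with
  | zero => simp [qpR]
  | succ l ihl =>
    induction k with
    | zero => simp [qpR]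
    | succ k ihk =>
      have hl := ihl (k + 1)
      rw [show k + (l + 1) = k + 1 + l by ring, qpR_succ q q l] at ihk
      rw [qpR_succ q q k] at hl
      rw [show k + 1 + (l + 1) = k + 1 + l + 1 by ring, qBinom_succ_succ, qpR_succ q q k,
        qpR_succ q q l, qpR_succ q q (k + 1 + l)]
      linear_combination q ^ (k + 1) * (1 - q * q ^ l) * hl + (1 - q * q ^ k) * ihk

theorem qBinom_eq_div {q : ℝ} (hq : ∀ n, qpR q q n ≠ 0) {m j : ℕ} (h : j ≤ m) :
    qBinom q m j = qpR q q m / (qpR q q j * qpR q q (m - j)) := by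
  obtain ⟨l, rfl⟩ := Nat.exists_eq_add_of_le h
  rw [Nat.add_sub_cancel_left, eq_div_iff (mul_ne_zero (hq j) (hq l)), ← mul_assoc,
    qBinom_add_mul_qpR]

theorem qBinom_add_mul_qBinom {q : ℝ} (hq : ∀ n, qpR q q n ≠ 0) {i r : ℕ} (h : i ≤ r)
    (s : ℕ) :
    qBinom q (s + r) (s + i) * qBinom q (s + i) s = qBinom q (s + r) s * qBinom q r i := by
  obtain ⟨t, rfl⟩ := Nat.exists_eq_add_of_le h
  have h₁ := qBinom_add_mul_qpR q (s + i) t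
  have h₂ := qBinom_add_mul_qpR q s i
  have h₃ := qBinom_add_mul_qpR q s (i + t)
  have h₄ := qBinom_add_mul_qpR q i t
  rw [← add_assoc] at h₃ ⊢
  refine mul_right_cancel₀ (mul_ne_zero (mul_ne_zero (hq s) (hq i)) (hq t)) ?_
  linear_combination qBinom q (s + i + t) (s + i) * qpR q q t * h₂ + h₁
    - qBinom q (s + i + t) s * qpR q q s * h₄ - h₃

theorem sum_qBinom_mul_qpR (q b c : ℝ) (n : ℕ) :
    ∑ k ∈ range (n + 1), qBinom q n k * (c ^ k * qpR b q k * qpR c q (n - k))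
      = qpR (b * c) q n := by
  induction n generalizing b c with
  | zero => simp [qpR]
  | succ n ih =>
    have split : ∀ k ∈ range (n + 1),
        qBinom q n k * (q ^ k * (c ^ k * qpR b q k * qpR c q (n + 1 - k))
          + c ^ (k + 1) * qpR b q (k + 1) * qpR c q (n + 1 - (k + 1)))
        = (1 - c) * (qBinom q n k * ((c * q) ^ k * qpR b q k * qpR (c * q) q (n - k)))
          + c * (1 - b) * (qBinom q n k * (c ^ k * qpR (b * q) q k * qpR c q (n - k))) := by
      intro k hk
      rw [Nat.add_sub_add_right, Nat.succ_sub (mem_range_succ_iff.1 hk), qpR_succ' c,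
        qpR_succ' b]
      ring
    rw [sum_range_qBinom_succ_mul, sum_congr rfl split, sum_add_distrib, ← mul_sum, ← mul_sum,
      ih, ih, qpR_succ' (b * c), show b * (c * q) = b * c * q by ring,
      show b * q * c = b * c * q by ring]
    ring

theorem sum_qpR_mul_qBinom_mul_qBinom {q : ℝ} (hq : ∀ n, qpR q q n ≠ 0) (b μ : ℝ)
    (m s : ℕ) :
    ∑ j ∈ range (m + 1), μ ^ j * qpR b q j * qpR μ q (m - j) * qBinom q m j * qBinom q j s
      = μ ^ s * qpR b q s * qBinom q m s * qpR (b * q ^ s * μ) q (m - s) := by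
  rcases lt_or_ge m s with hms | hsm
  · rw [qBinom_eq_zero_of_lt q hms, mul_zero, zero_mul]
    refine sum_eq_zero fun j hj => ?_
    rw [qBinom_eq_zero_of_lt q ((mem_range_succ_iff.1 hj).trans_lt hms), mul_zero]
  obtain ⟨r, rfl⟩ := Nat.exists_eq_add_of_le hsm
  have below : ∀ j ∈ range s,
      μ ^ j * qpR b q j * qpR μ q (s + r - j) * qBinom q (s + r) j * qBinom q j s = 0 :=
    fun j hj => by rw [qBinom_eq_zero_of_lt q (mem_range.1 hj), mul_zero]
  have above : ∀ i ∈ range (r + 1),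
      μ ^ (s + i) * qpR b q (s + i) * qpR μ q (s + r - (s + i)) * qBinom q (s + r) (s + i)
          * qBinom q (s + i) s
        = μ ^ s * qpR b q s * qBinom q (s + r) s
          * (qBinom q r i * (μ ^ i * qpR (b * q ^ s) q i * qpR μ q (r - i))) := by
    intro i hi
    rw [mul_assoc _ (qBinom q (s + r) (s + i)),
      qBinom_add_mul_qBinom hq (mem_range_succ_iff.1 hi), Nat.add_sub_add_left,
      pow_add, qpR_add]
    ring
  rw [show s + r + 1 = s + (r + 1) by ring, sum_range_add, sum_eq_zero below, zero_add,
    sum_congr rfl above, ← mul_sum, sum_qBinom_mul_qpR, Nat.add_sub_cancel_left]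

theorem phi_eq {q : ℝ} (hq : ∀ n, qpR q q n ≠ 0) (μ ν : ℝ) {j m : ℕ} (h : j ≤ m) :
    phi q μ ν j m
      = μ ^ j * qpR (ν / μ) q j * qpR μ q (m - j) * qBinom q m j / qpR ν q m := by
  rw [phi, qBinom_eq_div hq h]
  ring

theorem sum_phi_mul_qBinom {q μ ν : ℝ} (hq : ∀ n, qpR q q n ≠ 0) (hμ : μ ≠ 0) {m : ℕ}
    (hν : qpR ν q m ≠ 0) (s : ℕ) :
    ∑ j ∈ range (m + 1), phi q μ ν j m * qBinom q j s
      = μ ^ s * qpR (ν / μ) q s / qpR ν q s * qBinom q m s := by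
  rcases lt_or_ge m s with hms | hsm
  · rw [qBinom_eq_zero_of_lt q hms, mul_zero]
    exact sum_eq_zero fun j hj =>
      by rw [qBinom_eq_zero_of_lt q ((mem_range_succ_iff.1 hj).trans_lt hms), mul_zero]
  have hsplit : qpR ν q m = qpR ν q s * qpR (ν * q ^ s) q (m - s) := by
    rw [← qpR_add, Nat.add_sub_cancel' hsm]
  rw [hsplit] at hν
  have hphi : ∀ j ∈ range (m + 1), phi q μ ν j m * qBinom q j s
      = μ ^ j * qpR (ν / μ) q j * qpR μ q (m - j) * qBinom q m j * qBinom q j s / qpR ν q m :=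
    fun j hj => by rw [phi_eq hq μ ν (mem_range_succ_iff.1 hj), div_mul_eq_mul_div]
  rw [sum_congr rfl hphi, ← sum_div, sum_qpR_mul_qBinom_mul_qBinom hq,
    mul_right_comm (ν / μ), div_mul_cancel₀ ν hμ, hsplit]
  field_simp [left_ne_zero_of_mul hν, right_ne_zero_of_mul hν]

noncomputable def momentCoeff (q μ ν : ℝ) (s : ℕ) : ℝ :=
  μ ^ s * qpR (ν / μ) q s / qpR ν q s * ∏ i ∈ range s, (q ^ s - q ^ i)

theorem sum_phi_mul_pow {q μ ν : ℝ} (hq : ∀ n, qpR q q n ≠ 0) (hμ : μ ≠ 0) {m : ℕ}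
    (hν : qpR ν q m ≠ 0) (y : ℕ) :
    ∑ j ∈ range (m + 1), phi q μ ν j m * q ^ (j * y)
      = ∑ s ∈ range (y + 1), momentCoeff q μ ν s * qBinom q m s * qBinom q y s := by
  have expand : ∀ j, q ^ (j * y) = ∑ s ∈ range (y + 1),
      (qBinom q y s * ∏ i ∈ range s, (q ^ s - q ^ i)) * qBinom q j s :=
    fun j => by
      rw [pow_mul, pow_eq_sum_qBinom_mul_prod q (q ^ j)]
      refine sum_congr rfl fun s _ => ?_
      rw [prod_pow_sub_pow_eq_qBinom_mul q j s, mul_comm (qBinom q j s), mul_assoc]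
  simp only [expand, mul_sum, sum_comm (s := range (m + 1))]
  refine sum_congr rfl fun s _ => ?_
  simp only [mul_left_comm (phi q μ ν _ m)]
  rw [← mul_sum, sum_phi_mul_qBinom hq hμ hν, momentCoeff]
  ring

theorem stmt7 (q μ ν : ℝ) (hq : |q| < 1) (hν : 0 ≤ ν) (hνμ : ν ≤ μ)
    (hμ0 : 0 < μ) (hμ : μ < 1) (m y : ℕ) :
    ∑ j ∈ Finset.range (m + 1), phi q μ ν j m * q ^ (j * y)
      = ∑ s ∈ Finset.range (y + 1), phi q μ ν s y * q ^ (s * m) := by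
  have hqq : ∀ n, qpR q q n ≠ 0 := qpR_ne_zero hq hq.le
  have hνq : ∀ n, qpR ν q n ≠ 0 :=
    qpR_ne_zero (abs_lt.2 ⟨by linarith, by linarith⟩) hq.le
  have extend : ∀ a b : ℕ,
      ∑ s ∈ range (b + 1), momentCoeff q μ ν s * qBinom q a s * qBinom q b s
        = ∑ s ∈ range (a + b + 1), momentCoeff q μ ν s * qBinom q a s * qBinom q b s :=
    fun a b => (eventually_constant_sum
      (fun s hs => by rw [qBinom_eq_zero_of_lt q hs, mul_zero]) (by omega)).symm
  rw [sum_phi_mul_pow hqq hμ0.ne' (hνq m), sum_phi_mul_pow hqq hμ0.ne' (hνq y), extend, extend,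
    add_comm y m]
  exact sum_congr rfl fun s _ => mul_right_comm _ _ _
end
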